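/- arXiv:1110.2872 — 4 statements merged into one kernel-verified Lean document; each statement's English description precedes it below -/
import Mathlib

section
/- The demand x₁¹(r) = 1/(1 + (ḡ₁/g₁)(1 + g₂₁ r/(σ² + λ₂^MRT g₂₁ − λ₁^MRT g₂₁ r))²) of consumer 1 for good 1 is strictly decreasing in the price ratio r = p₁/p₂ on the interval (λ₂^MRT g₁₂/(σ² + λ₁^MRT g₁₂), (σ² + λ₂^MRT g₂₁)/(λ₁^MRT g₂₁)). -/
theorem demand_strictly_decreasing_in_price_ratio
    (σ2 g1 gbar1 g12 g21 lam1mrt lam2mrt : ℝ)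
    (hσ : 0 < σ2) (hg1 : 0 < g1) (hgbar1 : 0 < gbar1) (hg12 : 0 < g12) (hg21 : 0 < g21)
    (hlam1 : lam1mrt ∈ Set.Ioo (0:ℝ) 1) (hlam2 : lam2mrt ∈ Set.Ioc (0:ℝ) 1)
    (x11 : ℝ → ℝ)
    (hx11 : ∀ r, x11 r = 1 / (1 + (gbar1 / g1) *
        (1 + g21 * r / (σ2 + lam2mrt * g21 - lam1mrt * g21 * r)) ^ 2)) :
    StrictAntiOn x11 (Set.Ioo (lam2mrt * g12 / (σ2 + lam1mrt * g12))
      ((σ2 + lam2mrt * g21) / (lam1mrt * g21))) := by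
  intro a ha b hb hab
  obtain ⟨ha1, ha2⟩ := ha
  obtain ⟨hb1, hb2⟩ := hb
  obtain ⟨hl1a, hl1b⟩ := hlam1
  obtain ⟨hl2a, hl2b⟩ := hlam2
  have hpos : 0 < lam1mrt * g21 := by positivity
  have ha0 : 0 < a := lt_trans (by positivity) ha1
  have hb0 : 0 < b := ha0.trans hab
  have hDb : 0 < σ2 + lam2mrt * g21 - lam1mrt * g21 * b := by
    have h := (lt_div_iff₀ hpos).mp hb2
    nlinarith
  have hDa : 0 < σ2 + lam2mrt * g21 - lam1mrt * g21 * a := by nlinarith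
  rw [hx11 a, hx11 b]
  have hc : 0 < gbar1 / g1 := by positivity
  have hlt : g21 * a / (σ2 + lam2mrt * g21 - lam1mrt * g21 * a)
      < g21 * b / (σ2 + lam2mrt * g21 - lam1mrt * g21 * b) := by
    rw [div_lt_div_iff₀ hDa hDb]
    nlinarith [mul_pos (sub_pos.mpr hab) (mul_pos hg21 (by positivity : (0:ℝ) < σ2 + lam2mrt * g21))]
  have hfa : 0 ≤ g21 * a / (σ2 + lam2mrt * g21 - lam1mrt * g21 * a) := by positivity
  apply one_div_lt_one_div_of_lt
  · positivity
  · have hsq : (1 + g21 * a / (σ2 + lam2mrt * g21 - lam1mrt * g21 * a)) ^ 2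
        < (1 + g21 * b / (σ2 + lam2mrt * g21 - lam1mrt * g21 * b)) ^ 2 := by
      nlinarith
    have := mul_lt_mul_of_pos_left hsq hc
    linarith
end

section
/- Gross substitutes property: the aggregate excess demand of good 1, z₁(r) = x₁¹(r) + x₁²(r) − λ₁^MRT, where x₁¹(r) = 1/(1 + (ḡ₁/g₁)(1 + g₂₁ r/(σ² + λ₂^MRT g₂₁ − λ₁^MRT g₂₁ r))²) and x₁²(r) = (1/r)(λ₂^MRT − 1/(1 + (ḡ₂/g₂)(1 + g₁₂ (1/r)/(σ² + λ₁^MRT g₁₂ − λ₂^MRT g₁₂ (1/r)))²)), is strictly decreasing in the price ratio r = p₁/p₂ on the feasible interval. -/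
set_option maxHeartbeats 2000000 in
theorem excess_demand_strictly_decreasing
    (σ2 g1 gbar1 g2 gbar2 g12 g21 : ℝ)
    (hσ : 0 < σ2) (hg1 : 0 < g1) (hgbar1 : 0 < gbar1)
    (hg2 : 0 < g2) (hgbar2 : 0 < gbar2) (hg12 : 0 < g12) (hg21 : 0 < g21)
    (lam1mrt lam2mrt : ℝ)
    (hlam1 : lam1mrt = g1 / (g1 + gbar1)) (hlam2 : lam2mrt = g2 / (g2 + gbar2))
    (x11 x12 z1 : ℝ → ℝ)
    (hx11 : ∀ r, x11 r = 1 / (1 + (gbar1 / g1) *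
        (1 + g21 * r / (σ2 + lam2mrt * g21 - lam1mrt * g21 * r)) ^ 2))
    (hx12 : ∀ r, x12 r = (1 / r) * (lam2mrt - 1 / (1 + (gbar2 / g2) *
        (1 + g12 * (1 / r) / (σ2 + lam1mrt * g12 - lam2mrt * g12 * (1 / r))) ^ 2)))
    (hz1 : ∀ r, z1 r = x11 r + x12 r - lam1mrt) :
    StrictAntiOn z1 (Set.Ioo (lam2mrt * g12 / (σ2 + lam1mrt * g12))
      ((σ2 + lam2mrt * g21) / (lam1mrt * g21))) := by
  -- basic facts about the lambdas
  have hl1 : 0 < lam1mrt := by rw [hlam1]; positivity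
  have hl2 : 0 < lam2mrt := by rw [hlam2]; positivity
  have hl2eq : lam2mrt * (1 + gbar2 / g2) = 1 := by
    rw [hlam2]; field_simp
  intro a ha b hb hab
  obtain ⟨haL, haR⟩ := ha
  obtain ⟨hbL, hbR⟩ := hb
  have hLpos : 0 < lam2mrt * g12 / (σ2 + lam1mrt * g12) := by positivity
  have ha0 : 0 < a := lt_trans hLpos haL
  have hb0 : 0 < b := lt_trans ha0 hab
  -- positivity of inner denominators for x11
  have hD1 : ∀ r, 0 < r → r < (σ2 + lam2mrt * g21) / (lam1mrt * g21) →
      0 < σ2 + lam2mrt * g21 - lam1mrt * g21 * r := by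
    intro r hr0 hr
    have := (lt_div_iff₀ (by positivity : (0:ℝ) < lam1mrt * g21)).mp hr
    nlinarith
  have hD1a := hD1 a ha0 haR
  have hD1b := hD1 b hb0 hbR
  -- positivity of inner denominators for x12 (argument 1/r)
  have hD2 : ∀ r, 0 < r → lam2mrt * g12 / (σ2 + lam1mrt * g12) < r →
      0 < σ2 + lam1mrt * g12 - lam2mrt * g12 * (1 / r) := by
    intro r hr0 hr
    have h1 := (div_lt_iff₀ (by positivity : (0:ℝ) < σ2 + lam1mrt * g12)).mp hr
    have : lam2mrt * g12 * (1 / r) < σ2 + lam1mrt * g12 := by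
      rw [mul_one_div, div_lt_iff₀ hr0]; nlinarith
    linarith
  have hD2a := hD2 a ha0 haL
  have hD2b := hD2 b hb0 hbL
  -- t1 monotone
  set ta := g21 * a / (σ2 + lam2mrt * g21 - lam1mrt * g21 * a) with hta
  set tb := g21 * b / (σ2 + lam2mrt * g21 - lam1mrt * g21 * b) with htb
  have hta0 : 0 < ta := by positivity
  have htab : ta < tb := by
    rw [hta, htb, div_lt_div_iff₀ hD1a hD1b]
    nlinarith [mul_pos hσ hg21, mul_pos hl2 (mul_pos hg21 hg21)]
  -- x11 decreasing
  have hx11ab : x11 b < x11 a := by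
    rw [hx11 a, hx11 b]
    have hsq : (1 + ta) ^ 2 < (1 + tb) ^ 2 := by
      apply pow_lt_pow_left₀ (by linarith) (by linarith)
      norm_num
    apply one_div_lt_one_div_of_lt
    · positivity
    · have hc : 0 < gbar1 / g1 := by positivity
      have := mul_lt_mul_of_pos_left hsq hc
      linarith
  -- t2 values
  set sa := 1 / a with hsa
  set sb := 1 / b with hsb
  have hsa0 : 0 < sa := by positivity
  have hsb0 : 0 < sb := by positivity
  have hsba : sb < sa := by
    rw [hsa, hsb]; exact one_div_lt_one_div_of_lt ha0 hab
  set ua := g12 * sa / (σ2 + lam1mrt * g12 - lam2mrt * g12 * sa) with hua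
  set ub := g12 * sb / (σ2 + lam1mrt * g12 - lam2mrt * g12 * sb) with hub
  have hua0 : 0 < ua := by rw [hua]; positivity
  have hub0 : 0 < ub := by rw [hub]; positivity
  have huba : ub < ua := by
    rw [hua, hub, div_lt_div_iff₀ hD2b hD2a]
    nlinarith [mul_pos hσ hg12, mul_pos hl1 (mul_pos hg12 hg12)]
  clear_value ta tb sa sb ua ub
  -- f values: f s = lam2 - 1/(1 + c2 (1+u)^2), with 1/(1+c2) = lam2
  have hc2 : 0 < gbar2 / g2 := by positivity
  have hfpos : ∀ u : ℝ, 0 < u →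
      0 < lam2mrt - 1 / (1 + (gbar2 / g2) * (1 + u) ^ 2) := by
    intro u hu
    have hden : 0 < 1 + (gbar2 / g2) * (1 + u) ^ 2 := by positivity
    have h1 : 1 / (1 + (gbar2 / g2) * (1 + u) ^ 2) < 1 / (1 + gbar2 / g2) := by
      apply one_div_lt_one_div_of_lt (by positivity)
      nlinarith [mul_pos hc2 hu, mul_nonneg hc2.le (sq_nonneg u)]
    have h2 : lam2mrt = 1 / (1 + gbar2 / g2) := by
      rw [hlam2, eq_div_iff (by positivity)]
      field_simp
    rw [h2]; linarith
  have hf_mono : lam2mrt - 1 / (1 + (gbar2 / g2) * (1 + ub) ^ 2) <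
      lam2mrt - 1 / (1 + (gbar2 / g2) * (1 + ua) ^ 2) := by
    have hsq : (1 + ub) ^ 2 < (1 + ua) ^ 2 := by
      apply pow_lt_pow_left₀ (by linarith) (by linarith)
      norm_num
    have h1 : 1 / (1 + (gbar2 / g2) * (1 + ua) ^ 2) <
        1 / (1 + (gbar2 / g2) * (1 + ub) ^ 2) := by
      apply one_div_lt_one_div_of_lt (by positivity)
      have := mul_lt_mul_of_pos_left hsq hc2
      linarith
    linarith
  -- x12 decreasing
  have hx12ab : x12 b < x12 a := by
    rw [hx12 a, hx12 b]
    rw [← hsa, ← hsb, ← hua, ← hub]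
    exact mul_lt_mul'' hsba hf_mono (le_of_lt hsb0) (le_of_lt (hfpos ub hub0))
  rw [hz1 a, hz1 b]
  linarith
end

section
/- Existence and uniqueness of the Walrasian price ratio: the aggregate excess demand z₁(r) (as defined from the two demand functions) is continuous and strictly decreasing on the open feasible interval (β_low, β_high) with β_low = λ₂^MRT g₁₂/(σ² + λ₁^MRT g₁₂) and β_high = (σ² + λ₂^MRT g₂₁)/(λ₁^MRT g₂₁), satisfies z₁(r) > 0 as r → β_low⁺ and z₁(r) < 0 as r → β_high⁻, and hence there is a unique r* ∈ (β_low, β_high) with z₁(r*) = 0. -/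
open Filter Topology

private lemma aux_inv_sq {c a b : ℝ} (hc : 0 < c) (ha : 0 < a) (hab : a < b) :
    1 / (1 + c * b ^ 2) < 1 / (1 + c * a ^ 2) := by
  apply one_div_lt_one_div_of_lt (by positivity)
  have h := mul_pos hc (mul_pos (sub_pos.mpr hab) (by linarith : (0:ℝ) < b + a))
  nlinarith [h]

set_option maxHeartbeats 1000000 in
theorem walrasian_price_exists_unique
    (σ2 g1 gbar1 g2 gbar2 g12 g21 : ℝ)
    (hσ : 0 < σ2) (hg1 : 0 < g1) (hgbar1 : 0 < gbar1)
    (hg2 : 0 < g2) (hgbar2 : 0 < gbar2) (hg12 : 0 < g12) (hg21 : 0 < g21)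
    (lam1mrt lam2mrt : ℝ)
    (hlam1 : lam1mrt = g1 / (g1 + gbar1)) (hlam2 : lam2mrt = g2 / (g2 + gbar2))
    (βlow βhigh : ℝ)
    (hβlow : βlow = lam2mrt * g12 / (σ2 + lam1mrt * g12))
    (hβhigh : βhigh = (σ2 + lam2mrt * g21) / (lam1mrt * g21))
    (x11 x12 z1 : ℝ → ℝ)
    (hx11 : ∀ r, x11 r = 1 / (1 + (gbar1 / g1) *
        (1 + g21 * r / (σ2 + lam2mrt * g21 - lam1mrt * g21 * r)) ^ 2))
    (hx12 : ∀ r, x12 r = (1 / r) * (lam2mrt - 1 / (1 + (gbar2 / g2) *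
        (1 + g12 / r / (σ2 + lam1mrt * g12 - lam2mrt * g12 / r)) ^ 2)))
    (hz1 : ∀ r, z1 r = x11 r + x12 r - lam1mrt) :
    ContinuousOn z1 (Set.Ioo βlow βhigh) ∧
    StrictAntiOn z1 (Set.Ioo βlow βhigh) ∧
    (∀ᶠ r in 𝓝[>] βlow, 0 < z1 r) ∧
    (∀ᶠ r in 𝓝[<] βhigh, z1 r < 0) ∧
    (∃! rstar, rstar ∈ Set.Ioo βlow βhigh ∧ z1 rstar = 0) := by
  have hL1 : 0 < lam1mrt := by rw [hlam1]; positivity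
  have hL1' : lam1mrt < 1 := by
    rw [hlam1, div_lt_one (by positivity)]; linarith
  have hL2 : 0 < lam2mrt := by rw [hlam2]; positivity
  have hL2' : lam2mrt < 1 := by
    rw [hlam2, div_lt_one (by positivity)]; linarith
  have hS : 0 < σ2 + lam1mrt * g12 := by positivity
  have hB1 : 0 < lam1mrt * g21 := by positivity
  have hc1 : 0 < gbar1 / g1 := by positivity
  have hc2 : 0 < gbar2 / g2 := by positivity
  have hβlow_pos : 0 < βlow := by rw [hβlow]; positivity
  have horder : βlow < βhigh := by
    rw [hβlow, hβhigh, div_lt_div_iff₀ hS hB1]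
    nlinarith [mul_pos hL2 hg12, mul_pos hL1 hg21, mul_pos hσ hσ,
      mul_pos (mul_pos hL2 hg21) hσ, mul_pos hσ (mul_pos hL1 hg12)]
  have hβhigh_pos : 0 < βhigh := hβlow_pos.trans horder
  have hI : ∀ r ∈ Set.Ioo βlow βhigh, 0 < r ∧
      0 < σ2 + lam2mrt * g21 - lam1mrt * g21 * r ∧
      0 < (σ2 + lam1mrt * g12) * r - lam2mrt * g12 := by
    intro r hr
    obtain ⟨h1, h2⟩ := hr
    have hr0 : 0 < r := hβlow_pos.trans h1
    refine ⟨hr0, ?_, ?_⟩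
    · nlinarith [(lt_div_iff₀ hB1).mp (hβhigh ▸ h2)]
    · nlinarith [(div_lt_iff₀ hS).mp (hβlow ▸ h1)]
  -- simplified component functions
  set F1 : ℝ → ℝ := fun r => 1 / (1 + gbar1 / g1 *
      (1 + g21 * r / (σ2 + lam2mrt * g21 - lam1mrt * g21 * r)) ^ 2) with hF1def
  set F2 : ℝ → ℝ := fun r => (1 / r) * (lam2mrt - 1 / (1 + gbar2 / g2 *
      (1 + g12 / ((σ2 + lam1mrt * g12) * r - lam2mrt * g12)) ^ 2)) with hF2def
  have hz1' : ∀ r ∈ Set.Ioo βlow βhigh, z1 r = F1 r + F2 r - lam1mrt := by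
    intro r hr
    obtain ⟨hr0, hD, hM⟩ := hI r hr
    have hkey : g12 / r / (σ2 + lam1mrt * g12 - lam2mrt * g12 / r)
        = g12 / ((σ2 + lam1mrt * g12) * r - lam2mrt * g12) := by
      rw [div_div]
      congr 1
      field_simp
    rw [hz1, hx11, hx12, hkey, hF1def, hF2def]
  -- continuity
  have hF1cont : ContinuousOn F1 (Set.Ioo βlow βhigh) := by
    apply ContinuousOn.div continuousOn_const
    · apply ContinuousOn.add continuousOn_const
      apply ContinuousOn.mul continuousOn_const
      apply ContinuousOn.pow
      apply ContinuousOn.add continuousOn_const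
      exact ContinuousOn.div (by fun_prop) (by fun_prop)
        (fun r hr => (hI r hr).2.1.ne')
    · intro r hr
      have hD := (hI r hr).2.1
      positivity
  have hF2cont : ContinuousOn F2 (Set.Ioo βlow βhigh) := by
    apply ContinuousOn.mul
    · exact ContinuousOn.div continuousOn_const (by fun_prop)
        (fun r hr => (hI r hr).1.ne')
    · apply ContinuousOn.sub continuousOn_const
      apply ContinuousOn.div continuousOn_const
      · apply ContinuousOn.add continuousOn_const
        apply ContinuousOn.mul continuousOn_const
        apply ContinuousOn.pow
        apply ContinuousOn.add continuousOn_const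
        exact ContinuousOn.div continuousOn_const (by fun_prop)
          (fun r hr => (hI r hr).2.2.ne')
      · intro r hr
        have hM := (hI r hr).2.2
        positivity
  have hcont : ContinuousOn z1 (Set.Ioo βlow βhigh) :=
    (((hF1cont.add hF2cont).sub continuousOn_const).congr hz1')
  -- strict antitonicity
  have hF1anti : ∀ r ∈ Set.Ioo βlow βhigh, ∀ s ∈ Set.Ioo βlow βhigh, r < s →
      F1 s < F1 r := by
    intro r hr s hs hrs
    obtain ⟨hr0, hDr, -⟩ := hI r hr
    obtain ⟨hs0, hDs, -⟩ := hI s hs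
    have hq_pos : 0 < 1 + g21 * r / (σ2 + lam2mrt * g21 - lam1mrt * g21 * r) := by
      positivity
    have hq_lt : 1 + g21 * r / (σ2 + lam2mrt * g21 - lam1mrt * g21 * r)
        < 1 + g21 * s / (σ2 + lam2mrt * g21 - lam1mrt * g21 * s) := by
      have : g21 * r / (σ2 + lam2mrt * g21 - lam1mrt * g21 * r)
          < g21 * s / (σ2 + lam2mrt * g21 - lam1mrt * g21 * s) := by
        rw [div_lt_div_iff₀ hDr hDs]
        nlinarith [mul_pos hg21 (mul_pos hσ (sub_pos.mpr hrs)),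
          mul_pos (mul_pos hg21 hL2) (mul_pos hg21 (sub_pos.mpr hrs))]
      linarith
    exact aux_inv_sq hc1 hq_pos hq_lt
  have hF2anti : ∀ r ∈ Set.Ioo βlow βhigh, ∀ s ∈ Set.Ioo βlow βhigh, r < s →
      F2 s < F2 r := by
    intro r hr s hs hrs
    obtain ⟨hr0, -, hMr⟩ := hI r hr
    obtain ⟨hs0, -, hMs⟩ := hI s hs
    have hw_lt : g12 / ((σ2 + lam1mrt * g12) * s - lam2mrt * g12)
        < g12 / ((σ2 + lam1mrt * g12) * r - lam2mrt * g12) := by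
      apply div_lt_div_of_pos_left hg12 hMr
      nlinarith
    have hws_pos : 0 < g12 / ((σ2 + lam1mrt * g12) * s - lam2mrt * g12) := by
      positivity
    have hh_lt : 1 / (1 + gbar2 / g2 *
        (1 + g12 / ((σ2 + lam1mrt * g12) * r - lam2mrt * g12)) ^ 2)
        < 1 / (1 + gbar2 / g2 *
        (1 + g12 / ((σ2 + lam1mrt * g12) * s - lam2mrt * g12)) ^ 2) :=
      aux_inv_sq hc2 (by linarith) (by linarith)
    have hhs_lt : 1 / (1 + gbar2 / g2 *
        (1 + g12 / ((σ2 + lam1mrt * g12) * s - lam2mrt * g12)) ^ 2) < lam2mrt := by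
      have h1 : 1 / (1 + gbar2 / g2 *
          (1 + g12 / ((σ2 + lam1mrt * g12) * s - lam2mrt * g12)) ^ 2)
          < 1 / (1 + gbar2 / g2 * (1:ℝ) ^ 2) :=
        aux_inv_sq hc2 one_pos (by linarith)
      have h2 : 1 / (1 + gbar2 / g2 * (1:ℝ) ^ 2) = lam2mrt := by
        rw [hlam2]
        rw [one_pow, mul_one]
        rw [div_eq_div_iff (by positivity) (by positivity)]
        field_simp
      linarith
    have hhr_pos : 0 < 1 / (1 + gbar2 / g2 *
        (1 + g12 / ((σ2 + lam1mrt * g12) * r - lam2mrt * g12)) ^ 2) := by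
      positivity
    simp only [hF2def]
    apply mul_lt_mul
    · exact one_div_lt_one_div_of_lt hr0 hrs
    · linarith
    · linarith
    · positivity
  have hanti : StrictAntiOn z1 (Set.Ioo βlow βhigh) := by
    intro r hr s hs hrs
    rw [hz1' r hr, hz1' s hs]
    have h1 := hF1anti r hr s hs hrs
    have h2 := hF2anti r hr s hs hrs
    linarith
  -- behavior near βlow
  have hImem_low : Set.Ioo βlow βhigh ∈ 𝓝[>] βlow :=
    Ioo_mem_nhdsGT_of_mem ⟨le_refl _, horder⟩
  have hDβlow : 0 < σ2 + lam2mrt * g21 - lam1mrt * g21 * βlow := by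
    have h := horder
    rw [hβhigh, lt_div_iff₀ hB1] at h
    nlinarith
  have hF1ca : ContinuousAt F1 βlow := by
    apply ContinuousAt.div continuousAt_const
    · apply ContinuousAt.add continuousAt_const
      apply ContinuousAt.mul continuousAt_const
      apply ContinuousAt.pow
      apply ContinuousAt.add continuousAt_const
      exact ContinuousAt.div (by fun_prop) (by fun_prop) hDβlow.ne'
    · positivity
  have tF1_low : Tendsto F1 (𝓝[>] βlow) (𝓝 (F1 βlow)) :=
    hF1ca.tendsto.mono_left nhdsWithin_le_nhds
  have hMβ : (σ2 + lam1mrt * g12) * βlow - lam2mrt * g12 = 0 := by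
    rw [hβlow]; field_simp; ring
  have tM : Tendsto (fun r => (σ2 + lam1mrt * g12) * r - lam2mrt * g12)
      (𝓝[>] βlow) (𝓝[>] 0) := by
    apply tendsto_nhdsWithin_of_tendsto_nhds_of_eventually_within
    · have hcm : Continuous fun r : ℝ => (σ2 + lam1mrt * g12) * r - lam2mrt * g12 := by
        fun_prop
      simpa [hMβ] using (hcm.tendsto βlow).mono_left nhdsWithin_le_nhds
    · filter_upwards [hImem_low] with r hr
      exact (hI r hr).2.2
  have tw : Tendsto (fun r => g12 / ((σ2 + lam1mrt * g12) * r - lam2mrt * g12))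
      (𝓝[>] βlow) atTop := by
    simp only [div_eq_mul_inv]
    exact Tendsto.const_mul_atTop hg12 (tendsto_inv_nhdsGT_zero.comp tM)
  have tsq : Tendsto (fun r => 1 + gbar2 / g2 *
      (1 + g12 / ((σ2 + lam1mrt * g12) * r - lam2mrt * g12)) ^ 2)
      (𝓝[>] βlow) atTop := by
    apply tendsto_atTop_add_const_left
    apply Tendsto.const_mul_atTop hc2
    apply tendsto_atTop_mono' _ ?_ (tendsto_atTop_add_const_left _ 1 tw)
    filter_upwards [tw.eventually (eventually_ge_atTop 0)] with r hw
    nlinarith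
  have th0 : Tendsto (fun r => 1 / (1 + gbar2 / g2 *
      (1 + g12 / ((σ2 + lam1mrt * g12) * r - lam2mrt * g12)) ^ 2))
      (𝓝[>] βlow) (𝓝 0) := by
    simpa [one_div, Function.comp_def] using tendsto_inv_atTop_zero.comp tsq
  have tinv : Tendsto (fun r : ℝ => 1 / r) (𝓝[>] βlow) (𝓝 (1 / βlow)) :=
    (ContinuousAt.div continuousAt_const continuousAt_id
      hβlow_pos.ne').tendsto.mono_left nhdsWithin_le_nhds
  have tF2_low : Tendsto F2 (𝓝[>] βlow) (𝓝 ((1 / βlow) * (lam2mrt - 0))) :=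
    tinv.mul (tendsto_const_nhds.sub th0)
  have tz_low : Tendsto z1 (𝓝[>] βlow)
      (𝓝 (F1 βlow + (1 / βlow) * (lam2mrt - 0) - lam1mrt)) := by
    apply Tendsto.congr' ?_ ((tF1_low.add tF2_low).sub tendsto_const_nhds)
    filter_upwards [hImem_low] with r hr
    exact (hz1' r hr).symm
  have hV : 0 < F1 βlow + (1 / βlow) * (lam2mrt - 0) - lam1mrt := by
    have h1 : 0 < F1 βlow := by simp only [hF1def]; positivity
    have h2 : (1 / βlow) * lam2mrt = (σ2 + lam1mrt * g12) / g12 := by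
      rw [hβlow]; field_simp
    have h3 : lam1mrt < (σ2 + lam1mrt * g12) / g12 := by
      rw [lt_div_iff₀ hg12]; nlinarith
    rw [sub_zero]
    linarith
  have hpos : ∀ᶠ r in 𝓝[>] βlow, 0 < z1 r := tz_low.eventually_const_lt hV
  -- behavior near βhigh
  have hImem_high : Set.Ioo βlow βhigh ∈ 𝓝[<] βhigh :=
    Ioo_mem_nhdsLT_of_mem ⟨horder, le_refl _⟩
  have hDβ0 : σ2 + lam2mrt * g21 - lam1mrt * g21 * βhigh = 0 := by
    rw [hβhigh]; field_simp; ring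
  have tD : Tendsto (fun r => σ2 + lam2mrt * g21 - lam1mrt * g21 * r)
      (𝓝[<] βhigh) (𝓝[>] 0) := by
    apply tendsto_nhdsWithin_of_tendsto_nhds_of_eventually_within
    · have hcm : Continuous fun r : ℝ => σ2 + lam2mrt * g21 - lam1mrt * g21 * r := by
        fun_prop
      simpa [hDβ0] using (hcm.tendsto βhigh).mono_left nhdsWithin_le_nhds
    · filter_upwards [hImem_high] with r hr
      exact (hI r hr).2.1
  have tq : Tendsto (fun r => g21 * r / (σ2 + lam2mrt * g21 - lam1mrt * g21 * r))
      (𝓝[<] βhigh) atTop := by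
    simp only [div_eq_mul_inv]
    apply Tendsto.pos_mul_atTop (by positivity : (0:ℝ) < g21 * βhigh)
    · exact ((continuous_const.mul continuous_id).tendsto βhigh).mono_left
        nhdsWithin_le_nhds
    · exact tendsto_inv_nhdsGT_zero.comp tD
  have tsq1 : Tendsto (fun r => 1 + gbar1 / g1 *
      (1 + g21 * r / (σ2 + lam2mrt * g21 - lam1mrt * g21 * r)) ^ 2)
      (𝓝[<] βhigh) atTop := by
    apply tendsto_atTop_add_const_left
    apply Tendsto.const_mul_atTop hc1
    apply tendsto_atTop_mono' _ ?_ (tendsto_atTop_add_const_left _ 1 tq)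
    filter_upwards [tq.eventually (eventually_ge_atTop 0)] with r hw
    nlinarith
  have tF1_high : Tendsto F1 (𝓝[<] βhigh) (𝓝 0) := by
    rw [hF1def]
    simpa [one_div, Function.comp_def] using tendsto_inv_atTop_zero.comp tsq1
  have hMβh : 0 < (σ2 + lam1mrt * g12) * βhigh - lam2mrt * g12 := by
    have h := horder
    rw [hβlow, div_lt_iff₀ hS] at h
    nlinarith
  have hF2ca : ContinuousAt F2 βhigh := by
    apply ContinuousAt.mul
    · exact ContinuousAt.div continuousAt_const continuousAt_id hβhigh_pos.ne'
    · apply ContinuousAt.sub continuousAt_const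
      apply ContinuousAt.div continuousAt_const
      · apply ContinuousAt.add continuousAt_const
        apply ContinuousAt.mul continuousAt_const
        apply ContinuousAt.pow
        apply ContinuousAt.add continuousAt_const
        exact ContinuousAt.div continuousAt_const (by fun_prop) hMβh.ne'
      · positivity
  have tF2_high : Tendsto F2 (𝓝[<] βhigh) (𝓝 (F2 βhigh)) :=
    hF2ca.tendsto.mono_left nhdsWithin_le_nhds
  have tz_high : Tendsto z1 (𝓝[<] βhigh) (𝓝 (0 + F2 βhigh - lam1mrt)) := by
    apply Tendsto.congr' ?_ ((tF1_high.add tF2_high).sub tendsto_const_nhds)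
    filter_upwards [hImem_high] with r hr
    exact (hz1' r hr).symm
  have hV' : 0 + F2 βhigh - lam1mrt < 0 := by
    have hh_pos : 0 < 1 / (1 + gbar2 / g2 *
        (1 + g12 / ((σ2 + lam1mrt * g12) * βhigh - lam2mrt * g12)) ^ 2) := by
      positivity
    have hkey : lam1mrt * βhigh = σ2 / g21 + lam2mrt := by
      rw [hβhigh]; field_simp
    have h5 : lam2mrt - 1 / (1 + gbar2 / g2 *
        (1 + g12 / ((σ2 + lam1mrt * g12) * βhigh - lam2mrt * g12)) ^ 2)
        < lam1mrt * βhigh := by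
      rw [hkey]
      have : 0 < σ2 / g21 := by positivity
      linarith
    have h6 : F2 βhigh < lam1mrt := by
      simp only [hF2def]
      rw [one_div_mul_eq_div, div_lt_iff₀ hβhigh_pos]
      linarith
    linarith
  have hneg : ∀ᶠ r in 𝓝[<] βhigh, z1 r < 0 := tz_high.eventually_lt_const hV'
  -- existence and uniqueness
  obtain ⟨a, haz, haI⟩ := (hpos.and (eventually_mem_set.mpr hImem_low)).exists
  obtain ⟨b, hbz, hbI⟩ := (hneg.and (eventually_mem_set.mpr hImem_high)).exists
  have hab : a < b := by
    rcases lt_trichotomy a b with h | h | h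
    · exact h
    · exfalso; rw [h] at haz; linarith
    · exfalso; have := hanti hbI haI h; linarith
  have hsub : Set.Icc a b ⊆ Set.Ioo βlow βhigh := Set.Icc_subset_Ioo haI.1 hbI.2
  obtain ⟨rstar, hrI, hrz⟩ :=
    intermediate_value_Icc' hab.le (hcont.mono hsub) ⟨hbz.le, haz.le⟩
  refine ⟨hcont, hanti, hpos, hneg, rstar, ⟨hsub hrI, hrz⟩, ?_⟩
  rintro y ⟨hyI, hyz⟩
  exact hanti.injOn hyI (hsub hrI) (by rw [hyz, hrz])
end

section
/- Dominant strategy of MRT: for every fixed λ₂ ∈ [0, λ₂^MRT], the function λ₁ ↦ φ₁(λ₁, λ₂) = (√(λ₁ g₁)+√((1−λ₁)ḡ₁))²/(σ² + λ₂ g₂₁) is uniquely maximized over [0, λ₁^MRT] at λ₁ = λ₁^MRT = g₁/(g₁+ḡ₁). Hence (λ₁^MRT, λ₂^MRT) is the unique Nash equilibrium of the strategic game where player k chooses λ_k ∈ [0, λ_k^MRT] to maximize φ_k. -/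
lemma key_lt (g gb l : ℝ) (hg : 0 < g) (hgb : 0 < gb) (h0 : 0 ≤ l) (h1 : l ≤ 1)
    (hne : l ≠ g / (g + gb)) :
    (Real.sqrt (l * g) + Real.sqrt ((1 - l) * gb)) ^ 2 < g + gb := by
  have h1' : 0 ≤ 1 - l := by linarith
  have hsum : 0 < g + gb := by linarith
  have hab : Real.sqrt (l * g) * Real.sqrt ((1 - l) * gb)
      = Real.sqrt (l * gb) * Real.sqrt ((1 - l) * g) := by
    rw [Real.sqrt_mul h0, Real.sqrt_mul h1', Real.sqrt_mul h0, Real.sqrt_mul h1']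
    ring
  have hxne : l * gb ≠ (1 - l) * g := by
    intro h
    apply hne
    field_simp
    nlinarith
  have hsne : Real.sqrt (l * gb) - Real.sqrt ((1 - l) * g) ≠ 0 :=
    sub_ne_zero.2 fun h => hxne ((Real.sqrt_inj (by positivity) (by positivity)).1 h)
  have hsq : 0 < (Real.sqrt (l * gb) - Real.sqrt ((1 - l) * g)) ^ 2 :=
    pow_pos (abs_pos.2 hsne) 2 |>.trans_eq (by rw [sq_abs])
  have e1 : Real.sqrt (l * g) ^ 2 = l * g := Real.sq_sqrt (by positivity)
  have e2 : Real.sqrt ((1 - l) * gb) ^ 2 = (1 - l) * gb := Real.sq_sqrt (by positivity)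
  have e3 : Real.sqrt (l * gb) ^ 2 = l * gb := Real.sq_sqrt (by positivity)
  have e4 : Real.sqrt ((1 - l) * g) ^ 2 = (1 - l) * g := Real.sq_sqrt (by positivity)
  nlinarith [hsq, hab, e1, e2, e3, e4]

lemma key_eq (g gb : ℝ) (hg : 0 < g) (hgb : 0 < gb) :
    (Real.sqrt ((g / (g + gb)) * g) + Real.sqrt ((1 - g / (g + gb)) * gb)) ^ 2 = g + gb := by
  have hsum : 0 < g + gb := by linarith
  have h1 : (g / (g + gb)) * g = (g / Real.sqrt (g + gb)) ^ 2 := by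
    rw [div_pow, Real.sq_sqrt hsum.le]; ring
  have h2 : (1 - g / (g + gb)) * gb = (gb / Real.sqrt (g + gb)) ^ 2 := by
    rw [div_pow, Real.sq_sqrt hsum.le]; field_simp; ring
  rw [h1, h2, Real.sqrt_sq (by positivity), Real.sqrt_sq (by positivity),
    ← add_div, div_pow, Real.sq_sqrt hsum.le]
  field_simp

theorem mrt_dominant_strategy_unique_nash
    (σ2 g1 gbar1 g2 gbar2 g12 g21 : ℝ)
    (hσ : 0 < σ2) (hg1 : 0 < g1) (hgbar1 : 0 < gbar1)
    (hg2 : 0 < g2) (hgbar2 : 0 < gbar2) (hg12 : 0 < g12) (hg21 : 0 < g21)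
    (lam1mrt lam2mrt : ℝ)
    (hlam1 : lam1mrt = g1 / (g1 + gbar1)) (hlam2 : lam2mrt = g2 / (g2 + gbar2))
    (φ1 φ2 : ℝ → ℝ → ℝ)
    (hφ1 : ∀ l1 l2, φ1 l1 l2 = (Real.sqrt (l1 * g1) + Real.sqrt ((1 - l1) * gbar1)) ^ 2
        / (σ2 + l2 * g21))
    (hφ2 : ∀ l1 l2, φ2 l1 l2 = (Real.sqrt (l2 * g2) + Real.sqrt ((1 - l2) * gbar2)) ^ 2
        / (σ2 + l1 * g12)) :
    (∀ l2 ∈ Set.Icc 0 lam2mrt, ∀ l1 ∈ Set.Icc 0 lam1mrt,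
        l1 ≠ lam1mrt → φ1 l1 l2 < φ1 lam1mrt l2) ∧
    (∀ a ∈ Set.Icc 0 lam1mrt, ∀ b ∈ Set.Icc 0 lam2mrt,
      ((∀ x ∈ Set.Icc 0 lam1mrt, φ1 x b ≤ φ1 a b) ∧
       (∀ y ∈ Set.Icc 0 lam2mrt, φ2 a y ≤ φ2 a b)) ↔ (a = lam1mrt ∧ b = lam2mrt)) := by
  have hl1pos : 0 ≤ lam1mrt := by rw [hlam1]; positivity
  have hl1lt1 : lam1mrt ≤ 1 := by
    rw [hlam1]; rw [div_le_one (by linarith)]; linarith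
  have hl2pos : 0 ≤ lam2mrt := by rw [hlam2]; positivity
  have hl2lt1 : lam2mrt ≤ 1 := by
    rw [hlam2]; rw [div_le_one (by linarith)]; linarith
  have strict1 : ∀ l2 ∈ Set.Icc (0:ℝ) lam2mrt, ∀ l1 ∈ Set.Icc (0:ℝ) lam1mrt,
      l1 ≠ lam1mrt → φ1 l1 l2 < φ1 lam1mrt l2 := by
    intro l2 hl2 l1 hl1 hne
    have hD : 0 < σ2 + l2 * g21 := by
      have := hl2.1; nlinarith
    rw [hφ1, hφ1]
    have hnum : (Real.sqrt (l1 * g1) + Real.sqrt ((1 - l1) * gbar1)) ^ 2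
        < (Real.sqrt (lam1mrt * g1) + Real.sqrt ((1 - lam1mrt) * gbar1)) ^ 2 := by
      rw [hlam1] at hl1 hne hl1lt1 ⊢
      rw [key_eq g1 gbar1 hg1 hgbar1]
      exact key_lt g1 gbar1 l1 hg1 hgbar1 hl1.1 (hl1.2.trans hl1lt1) hne
    exact (div_lt_div_iff_of_pos_right hD).2 hnum
  have strict2 : ∀ a ∈ Set.Icc (0:ℝ) lam1mrt, ∀ l2 ∈ Set.Icc (0:ℝ) lam2mrt,
      l2 ≠ lam2mrt → φ2 a l2 < φ2 a lam2mrt := by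
    intro a ha l2 hl2 hne
    have hD : 0 < σ2 + a * g12 := by
      have := ha.1; nlinarith
    rw [hφ2, hφ2]
    have hnum : (Real.sqrt (l2 * g2) + Real.sqrt ((1 - l2) * gbar2)) ^ 2
        < (Real.sqrt (lam2mrt * g2) + Real.sqrt ((1 - lam2mrt) * gbar2)) ^ 2 := by
      rw [hlam2] at hl2 hne hl2lt1 ⊢
      rw [key_eq g2 gbar2 hg2 hgbar2]
      exact key_lt g2 gbar2 l2 hg2 hgbar2 hl2.1 (hl2.2.trans hl2lt1) hne
    exact (div_lt_div_iff_of_pos_right hD).2 hnum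
  refine ⟨strict1, ?_⟩
  intro a ha b hb
  constructor
  · rintro ⟨hmax1, hmax2⟩
    constructor
    · by_contra hne
      exact absurd (hmax1 lam1mrt ⟨hl1pos, le_refl _⟩) (not_le.2 (strict1 b hb a ha hne))
    · by_contra hne
      exact absurd (hmax2 lam2mrt ⟨hl2pos, le_refl _⟩) (not_le.2 (strict2 a ha b hb hne))
  · rintro ⟨ea, eb⟩
    constructor
    · intro x hx
      rcases eq_or_ne x lam1mrt with h | h
      · rw [h, ea]
      · rw [ea]
        exact (strict1 b hb x hx h).le
    · intro y hy
      rcases eq_or_ne y lam2mrt with h | h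
      · rw [h, eb]
      · rw [eb]
        exact (strict2 a ha y hy h).le
end
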